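/- arXiv:math/0608128 — 3 statements merged into one kernel-verified Lean document; each statement's English description precedes it below -/
import Mathlib

section
/- Let H be a complex Hilbert space, B its open unit ball, τ ∈ H a unit vector, and f : B → H a ρ-monotone mapping such that the strong limit lim_{r→1⁻} f(rτ) = 0. If limsup_{r→1⁻} Re⟨f(rτ), τ⟩/(r−1) > −∞, then the limit α := lim_{r→1⁻} Re⟨f(rτ), τ⟩/(r−1) exists finitely and α = inf_{x∈B} 2 Re⟨f(x), x*⟩. -/
open Filter Metric Topology

/-- The normalized support functional `x* = x/(1-‖x‖²) - τ/(1-⟨τ,x⟩)`,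
where the inner product `⟨·,·⟩` of the paper is linear in the first variable,
i.e. `⟨a,b⟩ = inner b a` in Mathlib's convention. -/
noncomputable def xstar {H : Type*} [NormedAddCommGroup H] [InnerProductSpace ℂ H]
    (τ x : H) : H :=
  ((1 - (‖x‖ : ℂ) ^ 2)⁻¹) • x - ((1 - (inner ℂ x τ : ℂ))⁻¹) • τ

/-- `f` is hyperbolically monotone (ρ-monotone) on the open unit ball:
`Re[⟨f(x),x⟩/(1-‖x‖²) + ⟨y,f(y)⟩/(1-‖y‖²)] ≥ Re[(⟨f(x),y⟩+⟨x,f(y)⟩)/(1-⟨x,y⟩)]`,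
with the paper's inner product (linear in the first variable). -/
def RhoMonotone {H : Type*} [NormedAddCommGroup H] [InnerProductSpace ℂ H]
    (f : H → H) : Prop :=
  ∀ x ∈ ball (0 : H) 1, ∀ y ∈ ball (0 : H) 1,
    (((inner ℂ y (f x) : ℂ) + (inner ℂ (f y) x : ℂ)) / (1 - (inner ℂ y x : ℂ))).re ≤
      ((inner ℂ x (f x) : ℂ) / (1 - (‖x‖ : ℂ) ^ 2)
        + (inner ℂ (f y) y : ℂ) / (1 - (‖y‖ : ℂ) ^ 2)).re

/-!
Write `g r = Re⟨f(rτ),τ⟩/(r-1)` and `F x = 2 Re⟨f(x),x*⟩`. Applying ρ-monotonicity to the pair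
`x`, `rτ` and letting `r → 1⁻` (where `f(rτ) → 0`) gives `limsup g ≤ F x` for every `x ∈ B`,
hence `limsup g ≤ α := inf F`, so `α > -∞` by hypothesis. On the radius itself
`(sτ)* = -τ/(1-s²)`, so `g s = (1+s)/2 · F(sτ) ≥ (1+s)/2 · α`, and `liminf g ≥ α`.
-/

open scoped InnerProductSpace

lemma Complex.re_div_one_sub_ofReal_sq (z : ℂ) (t : ℝ) :
    (z / (1 - (t : ℂ) ^ 2)).re = z.re / (1 - t ^ 2) := by
  rw [show (1 : ℂ) - (t : ℂ) ^ 2 = ((1 - t ^ 2 : ℝ) : ℂ) by push_cast; rfl, Complex.div_ofReal_re]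

theorem tendsto_of_limsup_le_of_eventually_mul_le {α : Type*} {l : Filter α} [l.NeBot]
    {g c : α → ℝ} {β : ℝ} (hsup : limsup (fun a => (g a : EReal)) l ≤ β)
    (hc : Tendsto c l (𝓝 1)) (hinf : ∀ᶠ a in l, c a * β ≤ g a) : Tendsto g l (𝓝 β) := by
  have hcβ : Tendsto (fun a => ((c a * β : ℝ) : EReal)) l (𝓝 (β : EReal)) :=
    EReal.tendsto_coe.2 (by simpa using hc.mul_const β)
  refine EReal.tendsto_coe.1 (tendsto_of_le_liminf_of_limsup_le ?_ hsup)
  exact hcβ.liminf_eq.symm.trans_le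
    (liminf_le_liminf (hinf.mono fun a ha => EReal.coe_le_coe_iff.2 ha))

section Hilbert

variable {H : Type*} [NormedAddCommGroup H] [InnerProductSpace ℂ H]

lemma re_inner_xstar (τ x w : H) :
    (⟪xstar τ x, w⟫_ℂ).re = (⟪x, w⟫_ℂ).re / (1 - ‖x‖ ^ 2) - (⟪τ, w⟫_ℂ / (1 - ⟪τ, x⟫_ℂ)).re := by
  rw [← Complex.re_div_one_sub_ofReal_sq, ← Complex.sub_re, xstar, inner_sub_left,
    inner_smul_left, inner_smul_left, map_inv₀, map_inv₀, map_sub, map_sub, map_one, map_pow,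
    Complex.conj_ofReal, inner_conj_symm, div_eq_inv_mul, div_eq_inv_mul]

lemma norm_ofReal_smul_of_norm_eq_one {τ : H} (hτ : ‖τ‖ = 1) {r : ℝ} (hr : 0 ≤ r) :
    ‖(r : ℂ) • τ‖ = r := by
  rw [norm_smul, Complex.norm_real, hτ, Real.norm_of_nonneg hr, mul_one]

lemma xstar_ofReal_smul {τ : H} (hτ : ‖τ‖ = 1) {s : ℝ} (hs : s ^ 2 ≠ 1) :
    xstar τ ((s : ℂ) • τ) = ((-(1 - s ^ 2)⁻¹ : ℝ) : ℂ) • τ := by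
  have hnorm : ‖(s : ℂ) • τ‖ ^ 2 = s ^ 2 := by
    rw [norm_smul, Complex.norm_real, hτ, mul_one, Real.norm_eq_abs, sq_abs]
  have hinner : ⟪(s : ℂ) • τ, τ⟫_ℂ = s := by
    rw [inner_smul_left, inner_self_eq_norm_sq_to_K, hτ, Complex.conj_ofReal]; simp
  have h1 : (1 : ℂ) - s ≠ 0 := by norm_cast; exact fun h => hs (by nlinarith)
  have h2 : (1 : ℂ) - s ^ 2 ≠ 0 := by norm_cast; exact fun h => hs (by linarith)
  rw [xstar, hinner, ← Complex.ofReal_pow, hnorm, smul_smul, ← sub_smul]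
  congr 1
  push_cast
  field_simp
  ring

lemma re_inner_div_sub_one_eq {τ : H} (hτ : ‖τ‖ = 1) {s : ℝ} (hs : s ^ 2 ≠ 1) (w : H) :
    (⟪τ, w⟫_ℂ).re / (s - 1) = (1 + s) / 2 * (2 * (⟪xstar τ ((s : ℂ) • τ), w⟫_ℂ).re) := by
  have h1 : s - 1 ≠ 0 := fun h => hs (by nlinarith)
  have h2 : 1 - s ^ 2 ≠ 0 := fun h => hs (by linarith)
  rw [xstar_ofReal_smul hτ hs, inner_smul_left, Complex.conj_ofReal, Complex.re_ofReal_mul]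
  field_simp
  ring

/-- What ρ-monotonicity at the pair `x`, `rτ` bounds; at `r = 1`, with `f τ` replaced by `0`,
it is `Re⟨f(x),x*⟩`. -/
noncomputable def radialComparison (f : H → H) (τ x : H) (r : ℝ) : ℝ :=
  (⟪x, f x⟫_ℂ).re / (1 - ‖x‖ ^ 2)
    - ((r * ⟪τ, f x⟫_ℂ + ⟪f ((r : ℂ) • τ), x⟫_ℂ) / (1 - r * ⟪τ, x⟫_ℂ)).re

theorem RhoMonotone.div_sub_one_le_radialComparison {f : H → H} (hf : RhoMonotone f) {τ : H}
    (hτ : ‖τ‖ = 1) {x : H} (hx : x ∈ ball (0 : H) 1) {r : ℝ} (hr0 : 0 < r) (hr1 : r < 1) :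
    (⟪τ, f ((r : ℂ) • τ)⟫_ℂ).re / (r - 1) ≤ (1 + r) / r * radialComparison f τ x r := by
  have hrτ : ‖(r : ℂ) • τ‖ = r := norm_ofReal_smul_of_norm_eq_one hτ hr0.le
  have hmono := hf x hx ((r : ℂ) • τ) (by rwa [mem_ball_zero_iff, hrτ])
  simp only [inner_smul_left, inner_smul_right, Complex.conj_ofReal, hrτ, Complex.add_re,
    Complex.re_div_one_sub_ofReal_sq, Complex.re_ofReal_mul] at hmono
  rw [← inner_conj_symm (f ((r : ℂ) • τ)) τ, Complex.conj_re] at hmono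
  rw [radialComparison]
  generalize (⟪τ, f ((r : ℂ) • τ)⟫_ℂ).re = a at hmono ⊢
  generalize (⟪x, f x⟫_ℂ).re / (1 - ‖x‖ ^ 2) = A at hmono ⊢
  generalize ((r * ⟪τ, f x⟫_ℂ + _) / _).re = D at hmono ⊢
  have h1 : r - 1 ≠ 0 := by linarith
  have h2 : 1 - r ^ 2 ≠ 0 := by nlinarith
  have : (1 + r) / r * (A - D) - a / (r - 1) = (1 + r) / r * (A + r * a / (1 - r ^ 2) - D) := by
    field_simp
    ring
  linarith [mul_nonneg (by positivity : 0 ≤ (1 + r) / r) (sub_nonneg.2 hmono)]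

lemma tendsto_radialComparison {f : H → H} {τ x : H} (hx : ⟪τ, x⟫_ℂ ≠ 1)
    (hlim : Tendsto (fun r : ℝ => f ((r : ℂ) • τ)) (𝓝[<] 1) (𝓝 0)) :
    Tendsto (radialComparison f τ x) (𝓝[<] 1) (𝓝 (⟪xstar τ x, f x⟫_ℂ).re) := by
  have hofReal : Tendsto (fun r : ℝ => (r : ℂ)) (𝓝[<] 1) (𝓝 1) :=
    Complex.continuous_ofReal.continuousAt.tendsto.comp nhdsWithin_le_nhds
  have hnum : Tendsto (fun r : ℝ => r * ⟪τ, f x⟫_ℂ + ⟪f ((r : ℂ) • τ), x⟫_ℂ) (𝓝[<] 1)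
      (𝓝 ⟪τ, f x⟫_ℂ) := by
    simpa using (hofReal.mul_const _).add (hlim.inner tendsto_const_nhds)
  have hden : Tendsto (fun r : ℝ => 1 - r * ⟪τ, x⟫_ℂ) (𝓝[<] 1) (𝓝 (1 - ⟪τ, x⟫_ℂ)) := by
    simpa using tendsto_const_nhds.sub (hofReal.mul_const ⟪τ, x⟫_ℂ)
  rw [re_inner_xstar]
  exact tendsto_const_nhds.sub
    (Complex.continuous_re.continuousAt.tendsto.comp (hnum.div hden (sub_ne_zero.2 hx.symm)))

theorem RhoMonotone.limsup_le {f : H → H} (hf : RhoMonotone f) {τ : H} (hτ : ‖τ‖ = 1)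
    (hlim : Tendsto (fun r : ℝ => f ((r : ℂ) • τ)) (𝓝[<] 1) (𝓝 0)) {x : H}
    (hx : x ∈ ball (0 : H) 1) :
    limsup (fun r : ℝ => (((⟪τ, f ((r : ℂ) • τ)⟫_ℂ).re / (r - 1) : ℝ) : EReal)) (𝓝[<] 1) ≤
      ((2 * (⟪xstar τ x, f x⟫_ℂ).re : ℝ) : EReal) := by
  have hτx : ⟪τ, x⟫_ℂ ≠ 1 := by
    refine ne_of_apply_ne norm (ne_of_lt ?_)
    calc ‖⟪τ, x⟫_ℂ‖ ≤ ‖τ‖ * ‖x‖ := norm_inner_le_norm τ x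
      _ < ‖(1 : ℂ)‖ := by rw [hτ, one_mul, norm_one]; exact mem_ball_zero_iff.1 hx
  have hid : Tendsto (fun r : ℝ => r) (𝓝[<] 1) (𝓝 1) := nhdsWithin_le_nhds
  have hfactor : Tendsto (fun r : ℝ => (1 + r) / r) (𝓝[<] 1) (𝓝 2) := by
    have := (tendsto_const_nhds (x := (1 : ℝ))).add hid |>.div hid one_ne_zero
    rwa [div_one, one_add_one_eq_two] at this
  have hbound : ∀ᶠ r : ℝ in 𝓝[<] 1, (((⟪τ, f ((r : ℂ) • τ)⟫_ℂ).re / (r - 1) : ℝ) : EReal) ≤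
      (((1 + r) / r * radialComparison f τ x r : ℝ) : EReal) := by
    filter_upwards [Ioo_mem_nhdsLT zero_lt_one] with r hr
    exact EReal.coe_le_coe_iff.2 (hf.div_sub_one_le_radialComparison hτ hx hr.1 hr.2)
  exact (limsup_le_limsup hbound).trans_eq
    (EReal.tendsto_coe.2 (hfactor.mul (tendsto_radialComparison hτx hlim))).limsup_eq

end Hilbert

theorem stmt2_general {H : Type*} [NormedAddCommGroup H] [InnerProductSpace ℂ H]
    (τ : H) (hτ : ‖τ‖ = 1) (f : H → H)
    (hmono : RhoMonotone f)
    (hlim : Tendsto (fun r : ℝ => f ((r : ℂ) • τ)) (𝓝[<] (1 : ℝ)) (𝓝 (0 : H)))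
    (hlimsup : ⊥ < limsup (fun r : ℝ =>
        (((inner ℂ τ (f ((r : ℂ) • τ)) : ℂ).re / (r - 1) : ℝ) : EReal)) (𝓝[<] (1 : ℝ))) :
    ∃ α : ℝ,
      Tendsto (fun r : ℝ => (inner ℂ τ (f ((r : ℂ) • τ)) : ℂ).re / (r - 1))
        (𝓝[<] (1 : ℝ)) (𝓝 α) ∧
      (α : EReal) = ⨅ x ∈ ball (0 : H) 1,
        ((2 * (inner ℂ (xstar τ x) (f x) : ℂ).re : ℝ) : EReal) := by
  set I : EReal := ⨅ x ∈ ball (0 : H) 1, ((2 * (inner ℂ (xstar τ x) (f x) : ℂ).re : ℝ) : EReal)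
  have hsup : limsup (fun r : ℝ => (((inner ℂ τ (f ((r : ℂ) • τ))).re / (r - 1) : ℝ) : EReal))
      (𝓝[<] 1) ≤ I :=
    le_iInf₂ fun x hx => hmono.limsup_le hτ hlim hx
  have hI_ne_top : I ≠ ⊤ :=
    ne_top_of_le_ne_top (EReal.coe_ne_top _) (iInf₂_le 0 (mem_ball_self one_pos))
  have hI_ne_bot : I ≠ ⊥ := (hlimsup.trans_le hsup).ne'
  lift I to ℝ using ⟨hI_ne_top, hI_ne_bot⟩ with β hβ
  refine ⟨β, tendsto_of_limsup_le_of_eventually_mul_le (c := fun s => (1 + s) / 2) hsup ?_ ?_, rfl⟩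
  · exact ((continuous_const.add continuous_id).div_const 2).tendsto' 1 1 (by norm_num)
      |>.mono_left nhdsWithin_le_nhds
  · filter_upwards [Ioo_mem_nhdsLT zero_lt_one] with s hs
    have hsτ : (s : ℂ) • τ ∈ ball (0 : H) 1 := by
      rw [mem_ball_zero_iff, norm_ofReal_smul_of_norm_eq_one hτ hs.1.le]; exact hs.2
    rw [re_inner_div_sub_one_eq hτ (by nlinarith [hs.1, hs.2] : s ^ 2 < 1).ne]
    exact mul_le_mul_of_nonneg_left (EReal.coe_le_coe_iff.1 (hβ.trans_le (iInf₂_le _ hsτ)))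
      (by linarith [hs.1])

theorem stmt2 {H : Type*} [NormedAddCommGroup H] [InnerProductSpace ℂ H] [CompleteSpace H]
    (τ : H) (hτ : ‖τ‖ = 1) (f : H → H)
    (hmono : RhoMonotone f)
    (hlim : Tendsto (fun r : ℝ => f ((r : ℂ) • τ)) (𝓝[<] (1 : ℝ)) (𝓝 (0 : H)))
    (hlimsup : ⊥ < limsup (fun r : ℝ =>
        (((inner ℂ τ (f ((r : ℂ) • τ)) : ℂ).re / (r - 1) : ℝ) : EReal)) (𝓝[<] (1 : ℝ))) :
    ∃ α : ℝ,
      Tendsto (fun r : ℝ => (inner ℂ τ (f ((r : ℂ) • τ)) : ℂ).re / (r - 1))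
        (𝓝[<] (1 : ℝ)) (𝓝 α) ∧
      (α : EReal) = ⨅ x ∈ ball (0 : H) 1,
        ((2 * (inner ℂ (xstar τ x) (f x) : ℂ).re : ℝ) : EReal) :=
  stmt2_general τ hτ f hmono hlim hlimsup
end

section
/- Let H be a complex Hilbert space, B its open unit ball, τ ∈ H a unit vector, f : B → H a mapping, {F_t}_{t≥0} a flow on B generated by f, and β ∈ ℝ. If 2 Re⟨f(x), x*⟩ ≥ β for all x ∈ B, then d_τ(F_t(x)) ≤ exp(−tβ) · d_τ(x) for all x ∈ B and all t ≥ 0. -/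
open Filter Metric Topology Set
open scoped InnerProductSpace ComplexConjugate

/-- The non-Euclidean "distance" `d_τ(x) = |1 - ⟨x,τ⟩|² / (1 - ‖x‖²)`. -/
noncomputable def dtau {H : Type*} [NormedAddCommGroup H] [InnerProductSpace ℂ H]
    (τ x : H) : ℝ :=
  ‖(1 : ℂ) - (inner ℂ τ x : ℂ)‖ ^ 2 / (1 - ‖x‖ ^ 2)

theorem HasDerivWithinAt.norm_sq_of_complex {E : Type*} [NormedAddCommGroup E]
    [InnerProductSpace ℂ E] {c : ℝ → E} {c' : E} {s : Set ℝ} {t : ℝ}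
    (hc : HasDerivWithinAt c c' s t) :
    HasDerivWithinAt (fun u => ‖c u‖ ^ 2) (2 * (⟪c t, c'⟫_ℂ).re) s t := by
  let _ := InnerProductSpace.complexToReal (G := E)
  exact hc.norm_sq

theorem le_mul_exp_of_hasDerivWithinAt_le_mul {g g' : ℝ → ℝ} {K a : ℝ}
    (hg : ∀ u ∈ Ici a, HasDerivWithinAt g (g' u) (Ici a) u)
    (bound : ∀ u ∈ Ici a, g' u ≤ K * g u) :
    ∀ t ∈ Ici a, g t ≤ g a * Real.exp (K * (t - a)) := by
  intro t ht
  have hcont : ContinuousOn g (Icc a t) := fun u hu =>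
    (hg u hu.1).continuousWithinAt.mono Icc_subset_Ici_self
  simpa only [gronwallBound_ε0] using le_gronwallBound_of_liminf_deriv_right_le hcont
    (fun u hu _ hr => ((hg u hu.1).mono (Ici_subset_Ici.mpr hu.1)).liminf_right_slope_le hr)
    le_rfl (fun u hu => (bound u hu.1).trans_eq (add_zero _).symm) t ⟨ht, le_rfl⟩

section

variable {H : Type*} [NormedAddCommGroup H] [InnerProductSpace ℂ H]

theorem dtau_nonneg (τ : H) {x : H} (hx : ‖x‖ ≤ 1) : 0 ≤ dtau τ x :=
  div_nonneg (sq_nonneg _) (by nlinarith [norm_nonneg x])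

theorem inner_xstar_left (τ x v : H) :
    ⟪xstar τ x, v⟫_ℂ = ((1 - ‖x‖ ^ 2 : ℝ) : ℂ)⁻¹ * ⟪x, v⟫_ℂ - (1 - ⟪τ, x⟫_ℂ)⁻¹ * ⟪τ, v⟫_ℂ := by
  simp [xstar]
  ring

theorem Complex.re_inv_mul_mul_sq_norm (z u : ℂ) : (z⁻¹ * u).re * ‖z‖ ^ 2 = (u * conj z).re := by
  rcases eq_or_ne z 0 with rfl | hz
  · simp
  rw [Complex.inv_def, mul_comm u, mul_right_comm, Complex.re_mul_ofReal, ← Complex.sq_norm]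
  field_simp

theorem hasDerivWithinAt_dtau (τ : H) {w : ℝ → H} {w' : H} {s : Set ℝ} {t : ℝ}
    (hw : HasDerivWithinAt w w' s t) (hwt : ‖w t‖ < 1) :
    HasDerivWithinAt (fun u => dtau τ (w u))
      (2 * (⟪xstar τ (w t), w'⟫_ℂ).re * dtau τ (w t)) s t := by
  have hD : 1 - ‖w t‖ ^ 2 ≠ 0 := by nlinarith [norm_nonneg (w t)]
  have hz : HasDerivWithinAt (fun u => 1 - ⟪τ, w u⟫_ℂ) (-⟪τ, w'⟫_ℂ) s t := by
    simpa using ((hasDerivWithinAt_const t s τ).inner ℂ hw).const_sub 1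
  refine (hz.norm_sq_of_complex.div (hw.norm_sq_of_complex.const_sub 1) hD).congr_deriv ?_
  rw [inner_xstar_left, dtau]
  simp only [RCLike.inner_apply]
  rw [neg_mul, Complex.neg_re, ← Complex.re_inv_mul_mul_sq_norm, Complex.sub_re,
    ← Complex.ofReal_inv, Complex.re_ofReal_mul]
  field_simp
  ring

end

theorem stmt4_general {H : Type*} [NormedAddCommGroup H] [InnerProductSpace ℂ H]
    (τ : H) (f : H → H) (F : ℝ → H → H) (β : ℝ)
    (hF0 : ∀ x ∈ ball (0 : H) 1, F 0 x = x)
    (hFmaps : ∀ t ≥ (0 : ℝ), ∀ x ∈ ball (0 : H) 1, F t x ∈ ball (0 : H) 1)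
    (hFderiv : ∀ x ∈ ball (0 : H) 1, ∀ t ≥ (0 : ℝ),
      HasDerivWithinAt (fun s => F s x) (-(f (F t x))) (Set.Ici (0 : ℝ)) t)
    (hβ : ∀ x ∈ ball (0 : H) 1, β ≤ 2 * (inner ℂ (xstar τ x) (f x) : ℂ).re) :
    ∀ x ∈ ball (0 : H) 1, ∀ t ≥ (0 : ℝ),
      dtau τ (F t x) ≤ Real.exp (-(t * β)) * dtau τ x := by
  intro x hx t ht
  have hFx : ∀ u ∈ Ici (0 : ℝ), ‖F u x‖ < 1 := fun u hu =>
    mem_ball_zero_iff.mp (hFmaps u hu x hx)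
  have hdecay : ∀ u ∈ Ici (0 : ℝ),
      2 * (⟪xstar τ (F u x), -f (F u x)⟫_ℂ).re * dtau τ (F u x) ≤ -β * dtau τ (F u x) := by
    intro u hu
    refine mul_le_mul_of_nonneg_right ?_ (dtau_nonneg τ (hFx u hu).le)
    rw [inner_neg_right, Complex.neg_re]
    linarith [hβ _ (hFmaps u hu x hx)]
  have := le_mul_exp_of_hasDerivWithinAt_le_mul
    (fun u hu => hasDerivWithinAt_dtau τ (hFderiv x hx u hu) (hFx u hu)) hdecay t ht
  rwa [hF0 x hx, sub_zero, mul_comm, neg_mul, mul_comm β] at this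

theorem stmt4 {H : Type*} [NormedAddCommGroup H] [InnerProductSpace ℂ H] [CompleteSpace H]
    (τ : H) (hτ : ‖τ‖ = 1) (f : H → H) (F : ℝ → H → H) (β : ℝ)
    (hF0 : ∀ x ∈ ball (0 : H) 1, F 0 x = x)
    (hFsemigroup : ∀ t ≥ (0 : ℝ), ∀ s ≥ (0 : ℝ), ∀ x ∈ ball (0 : H) 1,
      F (t + s) x = F t (F s x))
    (hFmaps : ∀ t ≥ (0 : ℝ), ∀ x ∈ ball (0 : H) 1, F t x ∈ ball (0 : H) 1)
    (hFderiv : ∀ x ∈ ball (0 : H) 1, ∀ t ≥ (0 : ℝ),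
      HasDerivWithinAt (fun s => F s x) (-(f (F t x))) (Set.Ici (0 : ℝ)) t)
    (hβ : ∀ x ∈ ball (0 : H) 1, β ≤ 2 * (inner ℂ (xstar τ x) (f x) : ℂ).re) :
    ∀ x ∈ ball (0 : H) 1, ∀ t ≥ (0 : ℝ),
      dtau τ (F t x) ≤ Real.exp (-(t * β)) * dtau τ x :=
  stmt4_general τ f F β hF0 hFmaps hFderiv hβ
end

section
/- Let g be a holomorphic function on the open unit disk 𝔻 = {λ ∈ ℂ : |λ| < 1} such that Re[ g(λ) / (−(1−λ)²) ] ≥ 0 for all λ ∈ 𝔻. Then the limit lim_{r→1⁻} g(r)/(r−1) exists, and it is a nonnegative real number. -/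
open Filter Metric Topology

/-!
Put `f z = g z / (-(1 - z) ^ 2)`, so that `Re f ≥ 0` on the disc and `g r / (r - 1) = (1 - r) f r`.
Schwarz's lemma applied to the Cayley transform of `f`, precomposed with a disc automorphism,
gives the Schwarz–Pick inequality, hence Harnack's inequality and a bound on `‖f‖` in terms of
`Re f`. Along the radius, Harnack makes `(1 - r) Re f(r) / (1 + r)` decrease, so that
`(1 - r) Re f(r) → a ≥ 0`, and letting `r → 1` in Harnack gives
`Re f ≥ (a / 2) Re ((1 + z) / (1 - z))`.
So `f₁ = f - (a / 2) (1 + z) / (1 - z)` still has nonnegative real part and `(1 - r) Re f₁(r) → 0`;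
the modulus bound upgrades this to `(1 - r) f₁(r) → 0`, whence `(1 - r) f(r) → a`.
-/

open Complex Set ComplexConjugate

theorem normSq_one_sub_conj_mul_sub_normSq_sub (p z : ℂ) :
    normSq (1 - conj p * z) - normSq (z - p) = (1 - normSq p) * (1 - normSq z) := by
  simp only [normSq_apply, sub_re, sub_im, mul_re, mul_im, conj_re, conj_im, one_re, one_im]
  ring

theorem normSq_lt_one_of_mem_ball {z : ℂ} (hz : z ∈ ball (0 : ℂ) 1) : normSq z < 1 := by
  rw [← Complex.sq_norm]
  exact pow_lt_one₀ (norm_nonneg z) (mem_ball_zero_iff.mp hz) two_ne_zero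

theorem norm_lt_norm_iff_normSq_lt {u v : ℂ} : ‖u‖ < ‖v‖ ↔ normSq u < normSq v := by
  rw [← Complex.sq_norm, ← Complex.sq_norm, sq_lt_sq₀ (norm_nonneg u) (norm_nonneg v)]

theorem norm_sub_lt_norm_one_sub_conj_mul {p z : ℂ} (hp : p ∈ ball (0 : ℂ) 1)
    (hz : z ∈ ball (0 : ℂ) 1) : ‖z - p‖ < ‖1 - conj p * z‖ := by
  rw [norm_lt_norm_iff_normSq_lt, ← sub_pos, normSq_one_sub_conj_mul_sub_normSq_sub]
  exact mul_pos (sub_pos.2 (normSq_lt_one_of_mem_ball hp))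
    (sub_pos.2 (normSq_lt_one_of_mem_ball hz))

theorem one_sub_conj_mul_ne_zero {p z : ℂ} (hp : p ∈ ball (0 : ℂ) 1) (hz : z ∈ ball (0 : ℂ) 1) :
    1 - conj p * z ≠ 0 :=
  norm_pos_iff.mp ((norm_nonneg _).trans_lt (norm_sub_lt_norm_one_sub_conj_mul hp hz))

theorem ne_one_of_mem_ball {z : ℂ} (hz : z ∈ ball (0 : ℂ) 1) : z ≠ 1 := by
  rintro rfl
  simp at hz

noncomputable def diskAut (p z : ℂ) : ℂ := (z - p) / (1 - conj p * z)

theorem diskAut_neg_zero (p : ℂ) : diskAut (-p) 0 = p := by simp [diskAut]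

theorem mapsTo_diskAut {p : ℂ} (hp : p ∈ ball (0 : ℂ) 1) :
    MapsTo (diskAut p) (ball 0 1) (ball 0 1) := fun z hz => by
  rw [mem_ball_zero_iff, diskAut, norm_div,
    div_lt_one ((norm_nonneg _).trans_lt (norm_sub_lt_norm_one_sub_conj_mul hp hz))]
  exact norm_sub_lt_norm_one_sub_conj_mul hp hz

theorem differentiableOn_diskAut {p : ℂ} (hp : p ∈ ball (0 : ℂ) 1) :
    DifferentiableOn ℂ (diskAut p) (ball 0 1) :=
  (differentiableOn_id.sub_const p).div (by fun_prop) fun _ hz => one_sub_conj_mul_ne_zero hp hz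

theorem diskAut_neg_diskAut {p z : ℂ} (hp : p ∈ ball (0 : ℂ) 1) (hz : z ∈ ball (0 : ℂ) 1) :
    diskAut (-p) (diskAut p z) = z := by
  have hD := one_sub_conj_mul_ne_zero hp hz
  have hden : 1 - conj p * z + conj p * (z - p) = 1 - conj p * p := by ring
  rw [diskAut, diskAut, map_neg, neg_mul, sub_neg_eq_add, sub_neg_eq_add, div_add' _ _ _ hD,
    mul_div_assoc', one_add_div hD, div_div_div_cancel_right₀ hD, hden,
    div_eq_iff (one_sub_conj_mul_ne_zero hp hp)]
  ring

theorem norm_sub_lt_norm_add_conj {u c : ℂ} (hu : 0 < u.re) (hc : 0 < c.re) :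
    ‖u - c‖ < ‖u + conj c‖ := by
  rw [norm_lt_norm_iff_normSq_lt, ← sub_pos]
  have : normSq (u + conj c) - normSq (u - c) = 4 * u.re * c.re := by
    simp only [normSq_apply, add_re, add_im, sub_re, sub_im, conj_re, conj_im]
    ring
  rw [this]
  positivity

theorem norm_sub_mul_le_of_re_pos {f : ℂ → ℂ} (hf : DifferentiableOn ℂ f (ball 0 1))
    (hpos : ∀ z ∈ ball (0 : ℂ) 1, 0 < (f z).re) {p z : ℂ} (hp : p ∈ ball (0 : ℂ) 1)
    (hz : z ∈ ball (0 : ℂ) 1) :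
    ‖f z - f p‖ * ‖1 - conj p * z‖ ≤ ‖z - p‖ * ‖f z + conj (f p)‖ := by
  have hp' : -p ∈ ball (0 : ℂ) 1 := by simpa using hp
  have hden : ∀ w ∈ ball (0 : ℂ) 1, f w + conj (f p) ≠ 0 := fun w hw =>
    norm_pos_iff.mp ((norm_nonneg _).trans_lt (norm_sub_lt_norm_add_conj (hpos w hw) (hpos p hp)))
  set G : ℂ → ℂ := fun w => (f w - f p) / (f w + conj (f p)) with hG
  have hGd : DifferentiableOn ℂ G (ball 0 1) := (hf.sub_const _).div (hf.add_const _) hden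
  have hGmaps : MapsTo G (ball 0 1) (ball 0 1) := fun w hw => by
    have := norm_sub_lt_norm_add_conj (hpos w hw) (hpos p hp)
    rw [mem_ball_zero_iff, hG, norm_div, div_lt_one ((norm_nonneg _).trans_lt this)]
    exact this
  have hschwarz := norm_le_norm_of_mapsTo_ball (hGd.comp (differentiableOn_diskAut hp')
    (mapsTo_diskAut hp')) ((hGmaps.comp (mapsTo_diskAut hp')).mono_right ball_subset_closedBall)
    (by simp [diskAut_neg_zero, hG]) (mem_ball_zero_iff.mp (mapsTo_diskAut hp hz))
  rw [Function.comp_apply, diskAut_neg_diskAut hp hz] at hschwarz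
  simp only [hG, diskAut, norm_div] at hschwarz
  rw [div_le_div_iff₀ (norm_pos_iff.2 (hden z hz))
    (norm_pos_iff.2 (one_sub_conj_mul_ne_zero hp hz))] at hschwarz
  linarith

theorem norm_sub_mul_le_of_re_nonneg {f : ℂ → ℂ} (hf : DifferentiableOn ℂ f (ball 0 1))
    (hnn : ∀ z ∈ ball (0 : ℂ) 1, 0 ≤ (f z).re) {p z : ℂ} (hp : p ∈ ball (0 : ℂ) 1)
    (hz : z ∈ ball (0 : ℂ) 1) :
    ‖f z - f p‖ * ‖1 - conj p * z‖ ≤ ‖z - p‖ * ‖f z + conj (f p)‖ := by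
  have hlim : Tendsto (fun ε : ℝ => ‖z - p‖ * ‖f z + conj (f p) + 2 * ε‖) (𝓝[>] 0)
      (𝓝 (‖z - p‖ * ‖f z + conj (f p)‖)) :=
    (Continuous.tendsto' (by fun_prop) _ _ (by simp)).mono_left nhdsWithin_le_nhds
  refine ge_of_tendsto hlim ?_
  filter_upwards [self_mem_nhdsWithin] with ε (hε : 0 < ε)
  have := norm_sub_mul_le_of_re_pos (hf.add_const (ε : ℂ))
    (fun w hw => by simpa using add_pos_of_nonneg_of_pos (hnn w hw) hε) hp hz
  have hsub : f z + ε - (f p + ε) = f z - f p := by ring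
  have hadd : f z + ε + conj (f p + ε) = f z + conj (f p) + 2 * ε := by
    rw [map_add, conj_ofReal]
    ring
  rwa [hsub, hadd] at this

theorem norm_sub_im_mul_I_mul_le {f : ℂ → ℂ} (hf : DifferentiableOn ℂ f (ball 0 1))
    (hnn : ∀ z ∈ ball (0 : ℂ) 1, 0 ≤ (f z).re) {p z : ℂ} (hp : p ∈ ball (0 : ℂ) 1)
    (hz : z ∈ ball (0 : ℂ) 1) :
    ‖f z - (f p).im * I‖ * (‖1 - conj p * z‖ - ‖z - p‖) ≤
      (f p).re * (‖1 - conj p * z‖ + ‖z - p‖) := by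
  set w := f z - (f p).im * I
  set b := (f p).re
  have hb : 0 ≤ b := hnn p hp
  have hsp := norm_sub_mul_le_of_re_nonneg hf hnn hp hz
  have hsub : f z - f p = w - b := by
    conv_lhs => rw [← re_add_im (f p)]
    ring
  have hadd : f z + conj (f p) = w + b := by
    conv_lhs => rw [← re_add_im (f p)]
    simp only [map_add, map_mul, conj_ofReal, conj_I]
    ring
  have hlower : ‖w‖ - b ≤ ‖w - b‖ := by
    simpa [abs_of_nonneg hb] using norm_sub_norm_le w (b : ℂ)
  have hupper : ‖w + b‖ ≤ ‖w‖ + b := by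
    simpa [abs_of_nonneg hb] using norm_add_le w (b : ℂ)
  rw [hsub, hadd] at hsp
  have key : (‖w‖ - b) * ‖1 - conj p * z‖ ≤ ‖z - p‖ * (‖w‖ + b) :=
    calc (‖w‖ - b) * ‖1 - conj p * z‖ ≤ ‖w - b‖ * ‖1 - conj p * z‖ :=
          mul_le_mul_of_nonneg_right hlower (norm_nonneg _)
      _ ≤ ‖z - p‖ * ‖w + b‖ := hsp
      _ ≤ ‖z - p‖ * (‖w‖ + b) := mul_le_mul_of_nonneg_left hupper (norm_nonneg _)
  linarith

theorem re_mul_le {f : ℂ → ℂ} (hf : DifferentiableOn ℂ f (ball 0 1))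
    (hnn : ∀ z ∈ ball (0 : ℂ) 1, 0 ≤ (f z).re) {p z : ℂ} (hp : p ∈ ball (0 : ℂ) 1)
    (hz : z ∈ ball (0 : ℂ) 1) :
    (f z).re * (‖1 - conj p * z‖ - ‖z - p‖) ≤ (f p).re * (‖1 - conj p * z‖ + ‖z - p‖) := by
  refine le_trans ?_ (norm_sub_im_mul_I_mul_le hf hnn hp hz)
  refine mul_le_mul_of_nonneg_right ?_ (sub_nonneg.2 (norm_sub_lt_norm_one_sub_conj_mul hp hz).le)
  simpa using re_le_norm (f z - (f p).im * I)

theorem ofReal_mem_ball_zero_one {r : ℝ} (h0 : 0 ≤ r) (h1 : r < 1) : (r : ℂ) ∈ ball (0 : ℂ) 1 := by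
  rwa [mem_ball_zero_iff, norm_real, Real.norm_of_nonneg h0]

theorem norm_sub_im_mul_I_mul_le_real {f : ℂ → ℂ} (hf : DifferentiableOn ℂ f (ball 0 1))
    (hnn : ∀ z ∈ ball (0 : ℂ) 1, 0 ≤ (f z).re) {r s : ℝ} (hr : 0 ≤ r) (hrs : r ≤ s) (hs : s < 1) :
    ‖f s - (f r).im * I‖ * ((1 - s) * (1 + r)) ≤ (f r).re * ((1 + s) * (1 - r)) := by
  have hN : ‖1 - conj (r : ℂ) * s‖ = 1 - r * s := by
    rw [conj_ofReal, ← ofReal_mul, ← ofReal_one, ← ofReal_sub, norm_real,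
      Real.norm_of_nonneg (by nlinarith)]
  have hM : ‖(s : ℂ) - r‖ = s - r := by
    rw [← ofReal_sub, norm_real, Real.norm_of_nonneg (by linarith)]
  have := norm_sub_im_mul_I_mul_le hf hnn (ofReal_mem_ball_zero_one hr (hrs.trans_lt hs))
    (ofReal_mem_ball_zero_one (hr.trans hrs) hs)
  rw [hN, hM] at this
  convert this using 2 <;> ring

theorem re_mul_le_real {f : ℂ → ℂ} (hf : DifferentiableOn ℂ f (ball 0 1))
    (hnn : ∀ z ∈ ball (0 : ℂ) 1, 0 ≤ (f z).re) {r s : ℝ} (hr : 0 ≤ r) (hrs : r ≤ s) (hs : s < 1) :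
    (f s).re * ((1 - s) * (1 + r)) ≤ (f r).re * ((1 + s) * (1 - r)) := by
  refine le_trans ?_ (norm_sub_im_mul_I_mul_le_real hf hnn hr hrs hs)
  refine mul_le_mul_of_nonneg_right ?_ (by nlinarith)
  simpa using re_le_norm (f s - (f r).im * I)

theorem one_sub_mul_norm_le {f : ℂ → ℂ} (hf : DifferentiableOn ℂ f (ball 0 1))
    (hnn : ∀ z ∈ ball (0 : ℂ) 1, 0 ≤ (f z).re) {r s : ℝ} (hr : 0 ≤ r) (hrs : r ≤ s) (hs : s < 1) :
    (1 - s) * ‖f s‖ ≤ (1 - s) * ‖f r‖ + 2 * ((1 - r) * (f r).re) := by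
  set X := ‖f s - (f r).im * I‖
  have hX := norm_sub_im_mul_I_mul_le_real hf hnn hr hrs hs
  have hfs : ‖f s‖ ≤ X + ‖f r‖ := by
    calc ‖f s‖ ≤ X + ‖(f r).im * I‖ := norm_le_norm_sub_add _ _
      _ ≤ X + ‖f r‖ := by simpa using abs_im_le_norm (f r)
  have hre : 0 ≤ (f r).re := hnn r (ofReal_mem_ball_zero_one hr (hrs.trans_lt hs))
  have hXs : (1 - s) * X ≤ 2 * ((1 - r) * (f r).re) := by
    refine le_of_mul_le_mul_right ?_ (by linarith : (0 : ℝ) < 1 + r)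
    have hre' : 0 ≤ (f r).re * (1 - r) := mul_nonneg hre (by linarith)
    calc (1 - s) * X * (1 + r) = X * ((1 - s) * (1 + r)) := by ring
      _ ≤ (f r).re * ((1 + s) * (1 - r)) := hX
      _ ≤ 2 * ((1 - r) * (f r).re) * (1 + r) := by nlinarith
  have := mul_le_mul_of_nonneg_left hfs (sub_nonneg.2 hs.le)
  linarith

theorem exists_tendsto_one_sub_mul_re {f : ℂ → ℂ} (hf : DifferentiableOn ℂ f (ball 0 1))
    (hnn : ∀ z ∈ ball (0 : ℂ) 1, 0 ≤ (f z).re) :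
    ∃ a : ℝ, 0 ≤ a ∧ Tendsto (fun r : ℝ => (1 - r) * (f r).re) (𝓝[<] 1) (𝓝 a) := by
  set φ : ℝ → ℝ := fun r => (1 - r) * (f r).re / (1 + r)
  have hφ_nonneg : ∀ r ∈ Ioo (0 : ℝ) 1, 0 ≤ φ r := fun r hr =>
    div_nonneg (mul_nonneg (by linarith [hr.2]) (hnn r (ofReal_mem_ball_zero_one hr.1.le hr.2)))
      (by linarith [hr.1])
  have hφ_anti : AntitoneOn φ (Ioo 0 1) := fun r hr s hs hrs => by
    rw [div_le_div_iff₀ (by linarith [hs.1]) (by linarith [hr.1])]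
    nlinarith [re_mul_le_real hf hnn hr.1.le hrs hs.2]
  have hφ_lim := hφ_anti.tendsto_nhdsWithin_Ioo_left (nonempty_Ioo.2 zero_lt_one)
    ⟨0, forall_mem_image.2 hφ_nonneg⟩
  refine ⟨2 * sInf (φ '' Ioo 0 1),
    mul_nonneg zero_le_two (Real.sInf_nonneg (forall_mem_image.2 hφ_nonneg)), ?_⟩
  have h2 : Tendsto (fun r : ℝ => 1 + r) (𝓝[<] 1) (𝓝 2) :=
    ((continuous_const_add 1).tendsto' 1 2 (by norm_num)).mono_left nhdsWithin_le_nhds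
  refine (h2.mul hφ_lim).congr' ?_
  filter_upwards [Ioo_mem_nhdsLT zero_lt_one] with r hr
  exact mul_div_cancel₀ _ (by linarith [hr.1])

theorem re_one_add_div_one_sub (z : ℂ) :
    ((1 + z) / (1 - z)).re = (1 - normSq z) / normSq (1 - z) := by
  rw [div_re, ← add_div]
  congr 1
  simp only [normSq_apply, add_re, add_im, sub_re, sub_im, one_re, one_im]
  ring

theorem mul_re_one_add_div_one_sub_le {f : ℂ → ℂ} (hf : DifferentiableOn ℂ f (ball 0 1))
    (hnn : ∀ z ∈ ball (0 : ℂ) 1, 0 ≤ (f z).re) {a : ℝ}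
    (ha : Tendsto (fun r : ℝ => (1 - r) * (f r).re) (𝓝[<] 1) (𝓝 a)) {z : ℂ}
    (hz : z ∈ ball (0 : ℂ) 1) :
    a / 2 * ((1 + z) / (1 - z)).re ≤ (f z).re := by
  set N : ℝ → ℝ := fun r => ‖1 - conj z * r‖
  set M : ℝ → ℝ := fun r => ‖(r : ℂ) - z‖
  have hharnack : ∀ r ∈ Ioo (0 : ℝ) 1,
      (1 - r) * (f r).re * ((1 + r) * (1 - normSq z)) ≤ (f z).re * (N r + M r) ^ 2 := by
    intro r hr
    have H := re_mul_le hf hnn hz (ofReal_mem_ball_zero_one hr.1.le hr.2)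
    have hid : N r ^ 2 - M r ^ 2 = (1 - normSq z) * (1 - r ^ 2) := by
      simp only [N, M, Complex.sq_norm, normSq_one_sub_conj_mul_sub_normSq_sub, normSq_ofReal]
      ring
    calc (1 - r) * (f r).re * ((1 + r) * (1 - normSq z))
        = (f r).re * (N r - M r) * (N r + M r) := by linear_combination (f r).re * hid.symm
      _ ≤ (f z).re * (N r + M r) * (N r + M r) :=
        mul_le_mul_of_nonneg_right H (add_nonneg (norm_nonneg _) (norm_nonneg _))
      _ = (f z).re * (N r + M r) ^ 2 := by ring
  have hleft : Tendsto (fun r : ℝ => (1 - r) * (f r).re * ((1 + r) * (1 - normSq z))) (𝓝[<] 1)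
      (𝓝 (a * (2 * (1 - normSq z)))) := by
    refine ha.mul ((Continuous.tendsto' (by fun_prop) 1 _ ?_).mono_left nhdsWithin_le_nhds)
    norm_num
  have hright : Tendsto (fun r : ℝ => (f z).re * (N r + M r) ^ 2) (𝓝[<] 1)
      (𝓝 ((f z).re * (4 * normSq (1 - z)))) := by
    refine (Continuous.tendsto' (by fun_prop) 1 _ ?_).mono_left nhdsWithin_le_nhds
    have hconj : ‖1 - conj z‖ = ‖1 - z‖ := by rw [← norm_conj, map_sub, map_one, conj_conj]
    simp only [N, M, ofReal_one, mul_one, hconj, norm_sub_rev (1 : ℂ) z, ← Complex.sq_norm]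
    ring
  have hlim := le_of_tendsto_of_tendsto hleft hright
    (eventually_of_mem (Ioo_mem_nhdsLT zero_lt_one) hharnack)
  have hpos : 0 < normSq (1 - z) := normSq_pos.2 (sub_ne_zero.2 (ne_one_of_mem_ball hz).symm)
  rw [re_one_add_div_one_sub, ← mul_div_assoc, div_le_iff₀ hpos]
  linarith

theorem tendsto_one_sub_mul_nhds_zero {f : ℂ → ℂ} (hf : DifferentiableOn ℂ f (ball 0 1))
    (hnn : ∀ z ∈ ball (0 : ℂ) 1, 0 ≤ (f z).re)
    (h0 : Tendsto (fun r : ℝ => (1 - r) * (f r).re) (𝓝[<] 1) (𝓝 0)) :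
    Tendsto (fun r : ℝ => (1 - (r : ℂ)) * f r) (𝓝[<] 1) (𝓝 0) := by
  suffices h : Tendsto (fun r : ℝ => (1 - r) * ‖f r‖) (𝓝[<] 1) (𝓝 0) by
    refine squeeze_zero_norm' ?_ h
    filter_upwards [self_mem_nhdsWithin] with r (hr : r < 1)
    rw [norm_mul, ← ofReal_one, ← ofReal_sub, norm_real, Real.norm_of_nonneg (by linarith)]
  refine tendsto_order.2 ⟨fun l hl => ?_, fun ε hε => ?_⟩
  · filter_upwards [self_mem_nhdsWithin] with r (hr : r < 1)
    exact hl.trans_le (mul_nonneg (by linarith) (norm_nonneg _))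
  · obtain ⟨r₀, hr₀small, hr₀⟩ :=
      ((h0.eventually (gt_mem_nhds (by positivity : 0 < ε / 4))).and
        (Ioo_mem_nhdsLT zero_lt_one)).exists
    have hlin : Tendsto (fun r : ℝ => (1 - r) * ‖f r₀‖) (𝓝[<] 1) (𝓝 0) :=
      (Continuous.tendsto' (by fun_prop) 1 0 (by simp)).mono_left nhdsWithin_le_nhds
    filter_upwards [Ioo_mem_nhdsLT hr₀.2, hlin.eventually (gt_mem_nhds (half_pos hε))]
      with r hr hsmall
    linarith [one_sub_mul_norm_le hf hnn hr₀.1.le hr.1.le hr.2]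

theorem exists_tendsto_one_sub_mul_of_re_nonneg {f : ℂ → ℂ}
    (hf : DifferentiableOn ℂ f (ball 0 1)) (hnn : ∀ z ∈ ball (0 : ℂ) 1, 0 ≤ (f z).re) :
    ∃ a : ℝ, 0 ≤ a ∧ Tendsto (fun r : ℝ => (1 - (r : ℂ)) * f r) (𝓝[<] 1) (𝓝 (a : ℂ)) := by
  obtain ⟨a, ha, hlim⟩ := exists_tendsto_one_sub_mul_re hf hnn
  -- subtract the Herglotz kernel carrying the mass `a / 2` at the boundary point `1`
  set q : ℂ → ℂ := fun z => ((a / 2 : ℝ) : ℂ) * ((1 + z) / (1 - z))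
  have hq : ∀ r : ℝ, r < 1 → (1 - (r : ℂ)) * q r = ((a / 2 * (1 + r) : ℝ) : ℂ) := by
    intro r hr
    have : (1 - (r : ℂ)) ≠ 0 := by exact_mod_cast (sub_pos.2 hr).ne'
    simp only [q]
    field_simp
    push_cast
    ring
  have hf₁ : DifferentiableOn ℂ (f - q) (ball 0 1) := by
    refine hf.sub (DifferentiableOn.const_mul ?_ _)
    refine (differentiableOn_const 1).add differentiableOn_id |>.div
      ((differentiableOn_const 1).sub differentiableOn_id) fun z hz =>
        sub_ne_zero.2 (ne_one_of_mem_ball hz).symm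
  have hnn₁ : ∀ z ∈ ball (0 : ℂ) 1, 0 ≤ ((f - q) z).re := fun z hz => by
    simpa [q, re_ofReal_mul] using mul_re_one_add_div_one_sub_le hf hnn hlim hz
  have h₀ : Tendsto (fun r : ℝ => (1 - r) * ((f - q) r).re) (𝓝[<] 1) (𝓝 0) := by
    have hlin : Tendsto (fun r : ℝ => a / 2 * (1 + r)) (𝓝[<] 1) (𝓝 a) :=
      (Continuous.tendsto' (by fun_prop) 1 a (by ring)).mono_left nhdsWithin_le_nhds
    have hdiff := hlim.sub hlin
    rw [sub_self] at hdiff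
    refine hdiff.congr' ?_
    filter_upwards [self_mem_nhdsWithin] with r (hr : r < 1)
    have := congrArg re (hq r hr)
    rw [← ofReal_one, ← ofReal_sub, re_ofReal_mul, ofReal_re] at this
    simp only [Pi.sub_apply, sub_re, mul_sub, this]
  have hlin : Tendsto (fun r : ℝ => ((a / 2 * (1 + r) : ℝ) : ℂ)) (𝓝[<] 1) (𝓝 (a : ℂ)) :=
    (Continuous.tendsto' (by fun_prop) 1 _ (by push_cast; ring)).mono_left nhdsWithin_le_nhds
  have hsum := (tendsto_one_sub_mul_nhds_zero hf₁ hnn₁ h₀).add hlin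
  rw [zero_add] at hsum
  refine ⟨a, ha, hsum.congr' ?_⟩
  filter_upwards [self_mem_nhdsWithin] with r (hr : r < 1)
  rw [Pi.sub_apply, mul_sub, hq r hr, sub_add_cancel]

theorem stmt8 (g : ℂ → ℂ)
    (hhol : DifferentiableOn ℂ g (ball (0 : ℂ) 1))
    (hre : ∀ z ∈ ball (0 : ℂ) 1, 0 ≤ (g z / (-(1 - z) ^ 2)).re) :
    ∃ a : ℝ, 0 ≤ a ∧
      Tendsto (fun r : ℝ => g (r : ℂ) / ((r : ℂ) - 1)) (𝓝[<] (1 : ℝ)) (𝓝 (a : ℂ)) := by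
  have hd : DifferentiableOn ℂ (fun z => g z / (-(1 - z) ^ 2)) (ball 0 1) := by
    refine hhol.div (by fun_prop) fun z hz =>
      neg_ne_zero.2 (pow_ne_zero 2 (sub_ne_zero.2 (ne_one_of_mem_ball hz).symm))
  obtain ⟨a, ha, hlim⟩ := exists_tendsto_one_sub_mul_of_re_nonneg hd hre
  refine ⟨a, ha, hlim.congr' ?_⟩
  filter_upwards [self_mem_nhdsWithin] with r (hr : r < 1)
  have h₁ : (1 : ℂ) - r ≠ 0 := by exact_mod_cast (sub_pos.2 hr).ne'
  have h₂ : (r : ℂ) - 1 ≠ 0 := by exact_mod_cast (sub_neg.2 hr).ne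
  field_simp
  ring
end
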